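/- For a finite simplicial complex X and d ≥ 0, L(X) ≤ d holds if and only if H̃_i(lk(X,σ);ℚ) = 0 for every simplex σ ∈ X (including the empty simplex) and every i ≥ d. -/

import Mathlib

open Classical in
/-- A (possibly abstract) simplicial complex: a set of finsets closed under taking subsets. -/
def IsComplex {V : Type*} (X : Set (Finset V)) : Prop := ∀ s ∈ X, ∀ t ⊆ s, t ∈ X

/-- Ordered `n`-tuples of vertices spanning a simplex of `X` (repetitions allowed). -/
def Tup {V : Type*} [DecidableEq V] (X : Set (Finset V)) (n : ℕ) : Type _ :=
  {σ : Fin n → V // Finset.image σ Finset.univ ∈ X}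

/-- Rational ordered simplicial chains on tuples of `n` vertices. -/
abbrev Chains {V : Type*} [DecidableEq V] (X : Set (Finset V)) (n : ℕ) := Tup X n →₀ ℚ

open Classical in
noncomputable def gen {V : Type*} [DecidableEq V] (X : Set (Finset V)) {n : ℕ}
    (τ : Fin n → V) : Chains X n :=
  if h : Finset.image τ Finset.univ ∈ X then Finsupp.single ⟨τ, h⟩ 1 else 0

/-- The simplicial boundary map. -/
noncomputable def bdry {V : Type*} [DecidableEq V] (X : Set (Finset V)) (n : ℕ) :
    Chains X (n + 1) →ₗ[ℚ] Chains X n :=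
  Finsupp.lsum ℚ fun σ => LinearMap.toSpanSingleton ℚ (Chains X n)
    (∑ i : Fin (n + 1), ((-1 : ℚ) ^ (i : ℕ)) • gen X (σ.1 ∘ i.succAbove))

/-- Reduced rational homology `H̃_i(X;ℚ)` (chains on `i+1` vertices correspond to
`i`-dimensional simplices; tuples with `0` vertices give the augmentation). -/
noncomputable abbrev reducedHomology {V : Type*} [DecidableEq V] (X : Set (Finset V)) (i : ℕ) :=
  LinearMap.ker (bdry X i) ⧸
    Submodule.comap (LinearMap.ker (bdry X i)).subtype (LinearMap.range (bdry X (i + 1)))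

/-- `H̃_i(X;ℚ) = 0`. -/
def HomologyVanishes {V : Type*} [DecidableEq V] (X : Set (Finset V)) (i : ℕ) : Prop :=
  ∀ x : reducedHomology X i, x = 0

/-- The induced subcomplex on a vertex subset. -/
def induced {V : Type*} (X : Set (Finset V)) (S : Finset V) : Set (Finset V) :=
  {s ∈ X | s ⊆ S}

/-- The rational Leray number `L(X)`. -/
noncomputable def lerayNumber {V : Type*} [DecidableEq V] (X : Set (Finset V)) : ℕ :=
  sInf {d | ∀ S : Finset V, ∀ i, d ≤ i → HomologyVanishes (induced X S) i}

/-- The link of a simplex `σ` in a complex `X`. -/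
def linkCplx {V : Type*} [DecidableEq V] (X : Set (Finset V)) (σ : Finset V) :
    Set (Finset V) :=
  {τ : Finset V | τ ∪ σ ∈ X ∧ Disjoint τ σ}

section Ambient

variable {V : Type*} [DecidableEq V]
set_option linter.unusedSectionVars false

/-- Ambient chains on all `n`-tuples of vertices. -/
abbrev Amb (V : Type*) (n : ℕ) := (Fin n → V) →₀ ℚ

noncomputable def faceSum (n : ℕ) (σ : Fin (n + 1) → V) : Amb V n :=
  ∑ i : Fin (n + 1), ((-1 : ℚ) ^ (i : ℕ)) • Finsupp.single (σ ∘ i.succAbove) 1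

/-- Ambient boundary map. -/
noncomputable def Dmap (n : ℕ) : Amb V (n + 1) →ₗ[ℚ] Amb V n :=
  Finsupp.lsum ℚ fun σ => LinearMap.toSpanSingleton ℚ (Amb V n) (faceSum n σ)

lemma Dmap_single (n : ℕ) (σ : Fin (n + 1) → V) (c : ℚ) :
    Dmap n (Finsupp.single σ c) = c • faceSum n σ := by
  simp [Dmap, LinearMap.toSpanSingleton_apply]

/-- Chains supported on tuples spanning simplices of `X`. -/
noncomputable def SuppIn (X : Set (Finset V)) (n : ℕ) : Submodule ℚ (Amb V n) where
  carrier := {m | ∀ τ, m τ ≠ 0 → Finset.image τ Finset.univ ∈ X}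
  add_mem' := by
    intro a b ha hb τ h
    by_cases h1 : a τ = 0
    · exact hb τ (by simpa [Finsupp.add_apply, h1] using h)
    · exact ha τ h1
  zero_mem' := by intro τ h; simp at h
  smul_mem' := by
    intro c a ha τ h
    exact ha τ fun h0 => h (by simp [Finsupp.smul_apply, h0])

lemma mem_suppIn {X : Set (Finset V)} {n : ℕ} {m : Amb V n} :
    m ∈ SuppIn X n ↔ ∀ τ, m τ ≠ 0 → Finset.image τ Finset.univ ∈ X := Iff.rfl

lemma single_mem_suppIn {X : Set (Finset V)} {n : ℕ} {τ : Fin n → V}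
    (h : Finset.image τ Finset.univ ∈ X) (c : ℚ) : Finsupp.single τ c ∈ SuppIn X n := by
  intro τ' h'
  rcases eq_or_ne τ' τ with rfl | hne
  · exact h
  · rw [Finsupp.single_apply_ne_zero] at h'
    exact absurd h'.1 hne

lemma suppIn_mono {X Y : Set (Finset V)} (h : X ⊆ Y) (n : ℕ) : SuppIn X n ≤ SuppIn Y n :=
  fun _ hm τ hτ => h (hm τ hτ)

lemma suppIn_inter {X Y : Set (Finset V)} (n : ℕ) :
    SuppIn (X ∩ Y) n = SuppIn X n ⊓ SuppIn Y n := by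
  ext m
  constructor
  · exact fun h => ⟨fun τ hτ => (h τ hτ).1, fun τ hτ => (h τ hτ).2⟩
  · exact fun h τ hτ => ⟨h.1 τ hτ, h.2 τ hτ⟩

open Classical in
lemma suppIn_union {X Y : Set (Finset V)} {n : ℕ} {m : Amb V n} (hm : m ∈ SuppIn (X ∪ Y) n) :
    ∃ a ∈ SuppIn X n, ∃ b ∈ SuppIn Y n, a + b = m := by
  classical
  refine ⟨m.filter (fun τ => Finset.image τ Finset.univ ∈ X), ?_,
    m.filter (fun τ => ¬ Finset.image τ Finset.univ ∈ X), ?_, ?_⟩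
  · intro τ hτ
    rw [Finsupp.filter_apply] at hτ
    by_cases h : Finset.image τ Finset.univ ∈ X
    · exact h
    · simp [h] at hτ
  · intro τ hτ
    rw [Finsupp.filter_apply] at hτ
    by_cases h : Finset.image τ Finset.univ ∈ X
    · simp [h] at hτ
    · exact (hm τ (by simpa [h] using hτ)).resolve_left h
  · exact Finsupp.filter_pos_add_filter_neg m _

lemma image_comp_subset {n k : ℕ} (σ : Fin n → V) (f : Fin k → Fin n) :
    Finset.image (σ ∘ f) Finset.univ ⊆ Finset.image σ Finset.univ := by
  intro x hx
  simp only [Finset.mem_image, Finset.mem_univ, true_and] at hx ⊢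
  rcases hx with ⟨i, hi⟩
  exact ⟨f i, hi⟩

lemma faceSum_mem_suppIn {X : Set (Finset V)} (hX : IsComplex X) {n : ℕ} {σ : Fin (n + 1) → V}
    (h : Finset.image σ Finset.univ ∈ X) : faceSum n σ ∈ SuppIn X n := by
  refine Submodule.sum_mem _ fun i _ => Submodule.smul_mem _ _ ?_
  exact single_mem_suppIn (hX _ h _ (image_comp_subset σ i.succAbove)) 1

lemma Dmap_mem_suppIn {X : Set (Finset V)} (hX : IsComplex X) {n : ℕ} {m : Amb V (n + 1)}
    (hm : m ∈ SuppIn X (n + 1)) : Dmap n m ∈ SuppIn X n := by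
  classical
  have : Dmap n m = m.sum fun σ c => c • faceSum n σ := by
    rw [Dmap, Finsupp.lsum_apply]
    rfl
  rw [this]
  refine Submodule.sum_mem _ fun σ hσ => Submodule.smul_mem _ _ ?_
  exact faceSum_mem_suppIn hX (hm σ (Finsupp.mem_support_iff.mp hσ))

end Ambient
section DD

variable {V : Type*} [DecidableEq V]
set_option linter.unusedSectionVars false

lemma val_succAbove {n : ℕ} (i : Fin (n + 1)) (k : Fin n) :
    (i.succAbove k : ℕ) = if (k : ℕ) < (i : ℕ) then (k : ℕ) else (k : ℕ) + 1 := by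
  unfold Fin.succAbove
  split_ifs with h1 h2 h3 <;>
    simp only [Fin.lt_def, Fin.coe_castSucc, Fin.val_succ] at * <;> omega

lemma Dmap_comp_Dmap (n : ℕ) :
    (Dmap n).comp (Dmap (n + 1)) = (0 : Amb V (n + 2) →ₗ[ℚ] Amb V n) := by
  apply Finsupp.lhom_ext
  intro σ c
  simp only [LinearMap.comp_apply, LinearMap.zero_apply]
  rw [Dmap_single, map_smul]
  suffices h : Dmap n (faceSum (n + 1) σ) = 0 by rw [h, smul_zero]
  rw [faceSum, map_sum]
  simp only [map_smul, Dmap_single, one_smul, faceSum, Finset.smul_sum, smul_smul]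
  rw [← Finset.sum_product']
  refine Finset.sum_ninvolution
    (fun p => if h : (p.1 : ℕ) ≤ (p.2 : ℕ)
      then (p.2.succ, (⟨(p.1 : ℕ), by omega⟩ : Fin (n + 1)))
      else ((p.2).castSucc, (⟨(p.1 : ℕ) - 1, by omega⟩ : Fin (n + 1))))
    ?_ ?_ (fun _ => Finset.mem_univ _) ?_
  · rintro ⟨i, j⟩
    dsimp only
    have hi := i.isLt; have hj := j.isLt
    by_cases h : (i : ℕ) ≤ (j : ℕ)
    · rw [dif_pos h]
      have he : (σ ∘ (j.succ).succAbove) ∘ ((⟨(i : ℕ), by omega⟩ : Fin (n + 1)).succAbove)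
          = (σ ∘ i.succAbove) ∘ j.succAbove := by
        funext k
        have hk := k.isLt
        simp only [Function.comp_apply]
        refine congrArg σ (Fin.ext ?_)
        rw [val_succAbove, val_succAbove, val_succAbove, val_succAbove]
        simp only [Fin.val_succ, Fin.val_mk]
        split_ifs <;> omega
      rw [he, ← add_smul]
      convert zero_smul ℚ _
      dsimp only
      have hv : ((j.succ : Fin (n + 2)) : ℕ) = (j : ℕ) + 1 := rfl
      rw [hv, pow_succ]
      ring
    · push_neg at h
      rw [dif_neg (by omega)]
      have he : (σ ∘ (j.castSucc).succAbove) ∘ ((⟨(i : ℕ) - 1, by omega⟩ : Fin (n + 1)).succAbove)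
          = (σ ∘ i.succAbove) ∘ j.succAbove := by
        funext k
        have hk := k.isLt
        simp only [Function.comp_apply]
        refine congrArg σ (Fin.ext ?_)
        rw [val_succAbove, val_succAbove, val_succAbove, val_succAbove]
        simp only [Fin.coe_castSucc, Fin.val_mk]
        split_ifs <;> omega
      rw [he, ← add_smul]
      convert zero_smul ℚ _
      dsimp only
      obtain ⟨a, ha⟩ : ∃ a, (i : ℕ) = a + 1 := ⟨(i : ℕ) - 1, by omega⟩
      have hv : ((j.castSucc : Fin (n + 2)) : ℕ) = (j : ℕ) := rfl
      rw [hv, ha]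
      simp only [Nat.add_sub_cancel, pow_succ]
      ring
  · rintro ⟨i, j⟩ - hne
    dsimp only at hne
    by_cases h : (i : ℕ) ≤ (j : ℕ)
    · rw [dif_pos h] at hne
      have := congrArg (fun p => ((p.1 : ℕ))) hne
      simp only [Fin.val_succ] at this
      omega
    · rw [dif_neg h] at hne
      have := congrArg (fun p => ((p.1 : ℕ))) hne
      simp only [Fin.coe_castSucc] at this
      push_neg at h
      omega
  · rintro ⟨i, j⟩
    dsimp only
    have hi := i.isLt; have hj := j.isLt
    split_ifs with h1 h2 h3
    · exact absurd h2 (by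
        simp only [Prod.mk.injEq, Fin.ext_iff, Fin.coe_castSucc, Fin.val_succ, Fin.val_mk]
        omega)
    · simp only [Prod.mk.injEq, Fin.ext_iff, Fin.coe_castSucc, Fin.val_succ, Fin.val_mk]
      exact ⟨trivial, by omega⟩
    · simp only [Prod.mk.injEq, Fin.ext_iff, Fin.coe_castSucc, Fin.val_succ, Fin.val_mk]
      exact ⟨by omega, trivial⟩
    · refine absurd ?_ h3
      simp only [Prod.mk.injEq, Fin.ext_iff, Fin.coe_castSucc, Fin.val_succ, Fin.val_mk]
      omega

lemma Dmap_Dmap (n : ℕ) (m : Amb V (n + 2)) : Dmap n (Dmap (n + 1) m) = 0 := by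
  have := Dmap_comp_Dmap (V := V) n
  exact (congrArg (fun f => f m) this).trans rfl

end DD
section Cone

variable {V : Type*} [DecidableEq V]
set_option linter.unusedSectionVars false

/-- Cone operator: prepend the vertex `v` to every tuple. -/
noncomputable def coneMap (v : V) (n : ℕ) : Amb V n →ₗ[ℚ] Amb V (n + 1) :=
  Finsupp.lmapDomain ℚ ℚ (fun τ : Fin n → V => Fin.cons v τ)

lemma coneMap_single (v : V) (n : ℕ) (τ : Fin n → V) (c : ℚ) :
    coneMap v n (Finsupp.single τ c) = Finsupp.single (Fin.cons v τ) c := by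
  simp [coneMap, Finsupp.mapDomain_single]

lemma cons_comp_succAbove (v : V) {n : ℕ} (τ : Fin (n + 1) → V) (j : Fin (n + 1)) :
    (Fin.cons v τ : Fin (n + 2) → V) ∘ (j.succ).succAbove
      = (Fin.cons v (τ ∘ j.succAbove) : Fin (n + 1) → V) := by
  funext k
  induction k using Fin.cases with
  | zero =>
    have h0 : (j.succ).succAbove 0 = 0 := by
      apply Fin.ext
      rw [val_succAbove]
      simp
    simp only [Function.comp_apply, h0]
    rfl
  | succ k =>
    rw [Function.comp_apply, Fin.succ_succAbove_succ, Fin.cons_succ, Fin.cons_succ]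
    rfl

lemma faceSum_cons (v : V) (n : ℕ) (τ : Fin (n + 1) → V) :
    faceSum (n + 1) (Fin.cons v τ) = Finsupp.single τ 1 - coneMap v n (faceSum n τ) := by
  rw [faceSum, Fin.sum_univ_succ]
  have h0 : (Fin.cons v τ : Fin (n + 2) → V) ∘ (0 : Fin (n + 2)).succAbove = τ := by
    funext k; rw [Fin.succAbove_zero, Function.comp_apply, Fin.cons_succ]
  rw [h0]
  simp only [Fin.val_zero, pow_zero, one_smul]
  rw [faceSum, map_sum, sub_eq_add_neg, ← Finset.sum_neg_distrib]
  congr 1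
  refine Finset.sum_congr rfl fun j _ => ?_
  rw [map_smul, coneMap_single]
  have hc := cons_comp_succAbove v τ j
  rw [hc, Fin.val_succ, pow_succ]
  module

lemma Dmap_coneMap (v : V) (n : ℕ) (m : Amb V (n + 1)) :
    Dmap (n + 1) (coneMap v (n + 1) m) = m - coneMap v n (Dmap n m) := by
  suffices h : (Dmap (n + 1)).comp (coneMap v (n + 1))
      = LinearMap.id - (coneMap v n).comp (Dmap n) by
    have := congrArg (fun f => f m) h
    simpa using this
  apply Finsupp.lhom_ext
  intro τ c
  simp only [LinearMap.comp_apply, LinearMap.sub_apply, LinearMap.id_apply]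
  rw [coneMap_single, Dmap_single, Dmap_single, map_smul, faceSum_cons, smul_sub]
  congr 1
  rw [Finsupp.smul_single, smul_eq_mul, mul_one]

lemma coneMap_image (v : V) {n : ℕ} (τ : Fin n → V) :
    Finset.image (Fin.cons v τ : Fin (n + 1) → V) Finset.univ
      = insert v (Finset.image τ Finset.univ) := by
  ext x
  simp only [Finset.mem_image, Finset.mem_univ, true_and, Finset.mem_insert]
  constructor
  · rintro ⟨k, rfl⟩
    induction k using Fin.cases with
    | zero => exact Or.inl rfl
    | succ k => exact Or.inr ⟨k, by rw [Fin.cons_succ]⟩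
  · rintro (rfl | ⟨k, rfl⟩)
    · exact ⟨0, rfl⟩
    · exact ⟨k.succ, by rw [Fin.cons_succ]⟩

end Cone
section Transfer

variable {V : Type*} [DecidableEq V]
set_option linter.unusedSectionVars false

/-- Inclusion of chains of `X` into ambient chains. -/
noncomputable def toAmb (X : Set (Finset V)) (n : ℕ) : Chains X n →ₗ[ℚ] Amb V n :=
  Finsupp.lmapDomain ℚ ℚ (fun σ : Tup X n => σ.1)

lemma toAmb_single (X : Set (Finset V)) (n : ℕ) (σ : Tup X n) (c : ℚ) :
    toAmb X n (Finsupp.single σ c) = Finsupp.single σ.1 c := by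
  simp [toAmb, Finsupp.mapDomain_single]

lemma toAmb_injective (X : Set (Finset V)) (n : ℕ) : Function.Injective (toAmb X n) := by
  apply Finsupp.mapDomain_injective
  intro a b hab
  exact Subtype.ext hab

lemma toAmb_apply (X : Set (Finset V)) (n : ℕ) (z : Chains X n) (σ : Tup X n) :
    toAmb X n z σ.1 = z σ := by
  exact Finsupp.mapDomain_apply (fun a b hab => Subtype.ext hab) z σ

lemma toAmb_mem_suppIn (X : Set (Finset V)) (n : ℕ) (z : Chains X n) :
    toAmb X n z ∈ SuppIn X n := by
  intro τ hτ
  classical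
  have : τ ∈ (Finsupp.mapDomain (fun σ : Tup X n => σ.1) z).support :=
    Finsupp.mem_support_iff.mpr hτ
  have h2 := Finsupp.mapDomain_support this
  rcases Finset.mem_image.mp h2 with ⟨σ, _, rfl⟩
  exact σ.2

lemma suppIn_mem_range {X : Set (Finset V)} {n : ℕ} {m : Amb V n} (hm : m ∈ SuppIn X n) :
    ∃ z : Chains X n, toAmb X n z = m := by
  classical
  refine ⟨Finsupp.subtypeDomain (fun τ => Finset.image τ Finset.univ ∈ X) m, ?_⟩
  ext τ
  by_cases h : Finset.image τ Finset.univ ∈ X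
  · have : τ = ((⟨τ, h⟩ : Tup X n)).1 := rfl
    exact toAmb_apply X n (Finsupp.subtypeDomain (fun τ => Finset.image τ Finset.univ ∈ X) m) ⟨τ, h⟩
  · simp only [toAmb, Finsupp.lmapDomain_apply]
    refine Eq.trans (Finsupp.mapDomain_notin_range _ _ ?_) ?_
    swap
    · exact (Finsupp.notMem_support_iff.mp (fun hs => h (hm τ (Finsupp.mem_support_iff.mp hs)))).symm
    · rintro ⟨σ, rfl⟩
      exact h σ.2

lemma toAmb_bdry {X : Set (Finset V)} (hX : IsComplex X) (n : ℕ) (z : Chains X (n + 1)) :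
    toAmb X n (bdry X n z) = Dmap n (toAmb X (n + 1) z) := by
  suffices h : (toAmb X n).comp (bdry X n) = (Dmap n).comp (toAmb X (n + 1)) by
    exact congrArg (fun f => f z) h
  apply Finsupp.lhom_ext
  intro σ c
  simp only [LinearMap.comp_apply]
  rw [toAmb_single, Dmap_single, bdry]
  rw [Finsupp.lsum_single, LinearMap.toSpanSingleton_apply]
  rw [map_smul, map_sum]
  rw [faceSum]
  congr 1
  refine Finset.sum_congr rfl fun i _ => ?_
  rw [map_smul]
  have hmem : Finset.image (σ.1 ∘ i.succAbove) Finset.univ ∈ X :=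
    hX _ σ.2 _ (image_comp_subset σ.1 i.succAbove)
  rw [gen, dif_pos hmem]
  exact congrArg (((-1 : ℚ) ^ (i : ℕ)) • ·) (toAmb_single X n ⟨σ.1 ∘ i.succAbove, hmem⟩ 1)

lemma homologyVanishes_iff (X : Set (Finset V)) (i : ℕ) :
    HomologyVanishes X i ↔
      ∀ z : Chains X (i + 1), bdry X i z = 0 → ∃ w : Chains X (i + 2), bdry X (i + 1) w = z := by
  constructor
  · intro h z hz
    have hx := h (Submodule.Quotient.mk ⟨z, hz⟩)
    rw [Submodule.Quotient.mk_eq_zero] at hx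
    rcases hx with ⟨w, hw⟩
    exact ⟨w, hw⟩
  · intro h x
    obtain ⟨⟨z, hz⟩, rfl⟩ := Submodule.Quotient.mk_surjective _ x
    rw [Submodule.Quotient.mk_eq_zero]
    rcases h z hz with ⟨w, hw⟩
    exact ⟨w, hw⟩

/-- Ambient formulation of vanishing of reduced homology. -/
def HVamb (X : Set (Finset V)) (i : ℕ) : Prop :=
  ∀ m ∈ SuppIn X (i + 1), Dmap i m = 0 →
    ∃ w ∈ SuppIn X (i + 2), Dmap (i + 1) w = m

lemma homologyVanishes_iff_amb {X : Set (Finset V)} (hX : IsComplex X) (i : ℕ) :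
    HomologyVanishes X i ↔ HVamb X i := by
  rw [homologyVanishes_iff]
  constructor
  · intro h m hm hDm
    rcases suppIn_mem_range hm with ⟨z, rfl⟩
    have hz : bdry X i z = 0 := by
      apply toAmb_injective X i
      rw [toAmb_bdry hX, hDm, map_zero]
    rcases h z hz with ⟨w, hw⟩
    refine ⟨toAmb X (i + 2) w, toAmb_mem_suppIn _ _ _, ?_⟩
    rw [← toAmb_bdry hX, hw]
  · intro h z hz
    have hm : toAmb X (i + 1) z ∈ SuppIn X (i + 1) := toAmb_mem_suppIn _ _ _
    have hDm : Dmap i (toAmb X (i + 1) z) = 0 := by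
      rw [← toAmb_bdry hX, hz, map_zero]
    rcases h _ hm hDm with ⟨w, hwS, hw⟩
    rcases suppIn_mem_range hwS with ⟨w', rfl⟩
    refine ⟨w', toAmb_injective X (i + 1) ?_⟩
    rw [toAmb_bdry hX, hw]

end Transfer
section MV

variable {V : Type*} [DecidableEq V]
set_option linter.unusedSectionVars false

/-- Deletion of the vertex `v`. -/
def delv (X : Set (Finset V)) (v : V) : Set (Finset V) := {s ∈ X | v ∉ s}

/-- (Closed) star of the vertex `v`. -/
def starv (X : Set (Finset V)) (v : V) : Set (Finset V) := {s | insert v s ∈ X}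

lemma delv_isComplex {X : Set (Finset V)} (hX : IsComplex X) (v : V) : IsComplex (delv X v) :=
  fun s hs t ht => ⟨hX s hs.1 t ht, fun hv => hs.2 (ht hv)⟩

lemma starv_isComplex {X : Set (Finset V)} (hX : IsComplex X) (v : V) : IsComplex (starv X v) :=
  fun s hs t ht => hX _ hs _ (Finset.insert_subset_insert v ht)

lemma starv_subset {X : Set (Finset V)} (hX : IsComplex X) (v : V) : starv X v ⊆ X :=
  fun s hs => hX _ hs _ (Finset.subset_insert v s)

lemma delv_union_starv {X : Set (Finset V)} (hX : IsComplex X) (v : V) :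
    delv X v ∪ starv X v = X := by
  ext s
  constructor
  · rintro (hs | hs)
    · exact hs.1
    · exact starv_subset hX v hs
  · intro hs
    by_cases hv : v ∈ s
    · exact Or.inr (by rwa [starv, Set.mem_setOf_eq, Finset.insert_eq_self.mpr hv])
    · exact Or.inl ⟨hs, hv⟩

lemma union_singleton_eq (s : Finset V) (v : V) : s ∪ {v} = insert v s := by
  ext x; simp [or_comm]

lemma delv_subset {X : Set (Finset V)} (v : V) : delv X v ⊆ X := fun _ hs => hs.1

lemma link_singleton {X : Set (Finset V)} (hX : IsComplex X) (v : V) :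
    linkCplx X {v} = delv X v ∩ starv X v := by
  ext s
  simp only [linkCplx, Set.mem_setOf_eq, Set.mem_inter_iff, delv, starv,
    Finset.disjoint_singleton_right, union_singleton_eq]
  constructor
  · rintro ⟨h1, h2⟩
    exact ⟨⟨hX _ h1 _ (Finset.subset_insert v s), h2⟩, h1⟩
  · rintro ⟨⟨h1, h2⟩, h3⟩
    exact ⟨h3, h2⟩

lemma linkCplx_isComplex {X : Set (Finset V)} (hX : IsComplex X) (σ : Finset V) :
    IsComplex (linkCplx X σ) := by
  rintro s ⟨hs1, hs2⟩ t ht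
  exact ⟨hX _ hs1 _ (Finset.union_subset_union_left ht),
    Finset.disjoint_of_subset_left ht hs2⟩

lemma link_singleton_mem {X : Set (Finset V)} {v : V} {s : Finset V} :
    s ∈ linkCplx X {v} ↔ insert v s ∈ X ∧ v ∉ s := by
  simp only [linkCplx, Set.mem_setOf_eq, Finset.disjoint_singleton_right,
    union_singleton_eq]

lemma coneMap_suppIn_star {X : Set (Finset V)} {v : V} {n : ℕ} {m : Amb V n}
    (hm : m ∈ SuppIn (starv X v) n) : coneMap v n m ∈ SuppIn (starv X v) (n + 1) := by
  classical
  intro τ hτ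
  have hsupp : τ ∈ (Finsupp.mapDomain (fun τ : Fin n → V => Fin.cons v τ) m).support :=
    Finsupp.mem_support_iff.mpr hτ
  have h2 := Finsupp.mapDomain_support hsupp
  rcases Finset.mem_image.mp h2 with ⟨ρ, hρ, rfl⟩
  have hρX : Finset.image ρ Finset.univ ∈ starv X v := hm ρ (Finsupp.mem_support_iff.mp hρ)
  rw [starv, Set.mem_setOf_eq] at hρX ⊢
  rw [coneMap_image, Finset.insert_idem]
  exact hρX

/-- MV chase 1: vanishing for `X` and the deletion gives vanishing for the link. -/
lemma MV1amb {X : Set (Finset V)} (hX : IsComplex X) (v : V) (i : ℕ)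
    (hXv : HVamb X (i + 1)) (hA : HVamb (delv X v) i) : HVamb (linkCplx X {v}) i := by
  intro z hz hDz
  rw [link_singleton hX] at hz ⊢
  rw [suppIn_inter] at hz
  obtain ⟨a, haS, haD⟩ := hA z hz.1 hDz
  set b := coneMap v (i + 1) z with hb
  have hbS : b ∈ SuppIn (starv X v) (i + 2) := coneMap_suppIn_star hz.2
  have hbD : Dmap (i + 1) b = z := by
    rw [hb, Dmap_coneMap, hDz, map_zero, sub_zero]
  have hcX : a - b ∈ SuppIn X (i + 2) := by
    rw [← delv_union_starv hX v]
    exact Submodule.sub_mem _ (suppIn_mono Set.subset_union_left _ haS)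
      (suppIn_mono Set.subset_union_right _ hbS)
  have hcD : Dmap (i + 1) (a - b) = 0 := by rw [map_sub, haD, hbD, sub_self]
  obtain ⟨w, hwS, hwD⟩ := hXv (a - b) hcX hcD
  rw [← delv_union_starv hX v] at hwS
  obtain ⟨wA, hwA, wB, hwB, hw⟩ := suppIn_union hwS
  refine ⟨a - Dmap (i + 2) wA, ?_, ?_⟩
  · rw [suppIn_inter]
    constructor
    · exact Submodule.sub_mem _ haS (Dmap_mem_suppIn (delv_isComplex hX v) hwA)
    · have hsum : Dmap (i + 2) wA + Dmap (i + 2) wB = a - b := by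
        rw [← map_add, hw, hwD]
      have key : a - Dmap (i + 2) wA = b + Dmap (i + 2) wB := by
        have h2 : a = b + (Dmap (i + 2) wA + Dmap (i + 2) wB) := by rw [hsum]; abel
        rw [h2]; abel
      rw [key]
      exact Submodule.add_mem _ hbS (Dmap_mem_suppIn (starv_isComplex hX v) hwB)
  · rw [map_sub, haD, Dmap_Dmap, sub_zero]

/-- MV chase 2: vanishing for `X` and the link gives vanishing for the deletion. -/
lemma MV2amb {X : Set (Finset V)} (hX : IsComplex X) (v : V) (i : ℕ)
    (hXv : HVamb X i) (hL : HVamb (linkCplx X {v}) i) : HVamb (delv X v) i := by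
  intro z hz hDz
  obtain ⟨w, hwS, hwD⟩ := hXv z (suppIn_mono (delv_subset v) _ hz) hDz
  rw [← delv_union_starv hX v] at hwS
  obtain ⟨wA, hwA, wB, hwB, hw⟩ := suppIn_union hwS
  have hsum : Dmap (i + 1) wA + Dmap (i + 1) wB = z := by rw [← map_add, hw, hwD]
  have hc : Dmap (i + 1) wB ∈ SuppIn (linkCplx X {v}) (i + 1) := by
    rw [link_singleton hX, suppIn_inter]
    refine ⟨?_, Dmap_mem_suppIn (starv_isComplex hX v) hwB⟩
    have key : Dmap (i + 1) wB = z - Dmap (i + 1) wA := by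
      rw [← hsum]; abel
    rw [key]
    exact Submodule.sub_mem _ hz (Dmap_mem_suppIn (delv_isComplex hX v) hwA)
  obtain ⟨u, huS, huD⟩ := hL (Dmap (i + 1) wB) hc (Dmap_Dmap i wB)
  refine ⟨wA + u, ?_, ?_⟩
  · refine Submodule.add_mem _ hwA ?_
    refine suppIn_mono ?_ _ huS
    rw [link_singleton hX]
    exact Set.inter_subset_left
  · rw [map_add, huD, hsum]

/-- MV chase 3: vanishing for deletion and link gives vanishing for `X`. -/
lemma MV3amb {X : Set (Finset V)} (hX : IsComplex X) (v : V) (j : ℕ)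
    (hA : HVamb (delv X v) (j + 1)) (hL : HVamb (linkCplx X {v}) j) : HVamb X (j + 1) := by
  intro z hz hDz
  rw [← delv_union_starv hX v] at hz
  obtain ⟨a, haS, b, hbS, hab⟩ := suppIn_union hz
  have hcA : Dmap (j + 1) a ∈ SuppIn (delv X v) (j + 1) :=
    Dmap_mem_suppIn (delv_isComplex hX v) haS
  have hcb : Dmap (j + 1) a = - Dmap (j + 1) b := by
    have h0 : Dmap (j + 1) a + Dmap (j + 1) b = 0 := by rw [← map_add, hab, hDz]
    exact eq_neg_of_add_eq_zero_left h0
  have hcB : Dmap (j + 1) a ∈ SuppIn (starv X v) (j + 1) := by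
    rw [hcb]
    exact Submodule.neg_mem _ (Dmap_mem_suppIn (starv_isComplex hX v) hbS)
  have hcL : Dmap (j + 1) a ∈ SuppIn (linkCplx X {v}) (j + 1) := by
    rw [link_singleton hX, suppIn_inter]; exact ⟨hcA, hcB⟩
  obtain ⟨u, huS, huD⟩ := hL (Dmap (j + 1) a) hcL (Dmap_Dmap j a)
  have huA : u ∈ SuppIn (delv X v) (j + 2) :=
    suppIn_mono (by rw [link_singleton hX]; exact Set.inter_subset_left) _ huS
  have huB : u ∈ SuppIn (starv X v) (j + 2) :=
    suppIn_mono (by rw [link_singleton hX]; exact Set.inter_subset_right) _ huS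
  obtain ⟨p, hpS, hpD⟩ := hA (a - u) (Submodule.sub_mem _ haS huA)
    (by rw [map_sub, huD, sub_self])
  set q := coneMap v (j + 2) (b + u) with hq
  have hqS : q ∈ SuppIn (starv X v) (j + 3) :=
    coneMap_suppIn_star (Submodule.add_mem _ hbS huB)
  have hDbu : Dmap (j + 1) (b + u) = 0 := by
    rw [map_add, huD, hcb]
    abel
  have hqD : Dmap (j + 2) q = b + u := by
    rw [hq, Dmap_coneMap, hDbu, map_zero, sub_zero]
  refine ⟨p + q, ?_, ?_⟩
  · rw [← delv_union_starv hX v]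
    exact Submodule.add_mem _ (suppIn_mono Set.subset_union_left _ hpS)
      (suppIn_mono Set.subset_union_right _ hqS)
  · rw [map_add, hpD, hqD, ← hab]; abel

end MV
section Final

variable {V : Type*} [DecidableEq V]
set_option linter.unusedSectionVars false

lemma linkCplx_empty (X : Set (Finset V)) : linkCplx X ∅ = X := by
  ext s; simp [linkCplx]

lemma induced_isComplex {X : Set (Finset V)} (hX : IsComplex X) (S : Finset V) :
    IsComplex (induced X S) :=
  fun s hs t ht => ⟨hX s hs.1 t ht, ht.trans hs.2⟩

lemma linkCplx_linkCplx (X : Set (Finset V)) (σ τ0 : Finset V) (hd : Disjoint τ0 σ) :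
    linkCplx (linkCplx X σ) τ0 = linkCplx X (σ ∪ τ0) := by
  ext ρ
  simp only [linkCplx, Set.mem_setOf_eq, Finset.disjoint_union_left,
    Finset.disjoint_union_right]
  have hu : (ρ ∪ τ0) ∪ σ = ρ ∪ (σ ∪ τ0) := by ext x; simp; tauto
  rw [hu]
  constructor
  · rintro ⟨⟨h1, h2, h3⟩, h4⟩; exact ⟨h1, h2, h4⟩
  · rintro ⟨h1, h2, h4⟩; exact ⟨⟨h1, h2, hd⟩, h4⟩

lemma induced_link (X : Set (Finset V)) (σ S : Finset V) :
    induced (linkCplx X σ) S = linkCplx (induced X (S ∪ σ)) σ := by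
  ext τ
  simp only [induced, linkCplx, Set.mem_setOf_eq]
  constructor
  · rintro ⟨⟨h1, h2⟩, h3⟩
    exact ⟨⟨h1, Finset.union_subset_union_left h3⟩, h2⟩
  · rintro ⟨⟨h1, h2⟩, h3⟩
    refine ⟨⟨h1, h3⟩, fun x hx => ?_⟩
    rcases Finset.mem_union.mp (h2 (Finset.mem_union_left σ hx)) with h | h
    · exact h
    · exact absurd h (Finset.disjoint_left.mp h3 hx)

lemma delv_induced (X : Set (Finset V)) (v : V) (S : Finset V) :
    delv (induced X (insert v S)) v = induced X (S.erase v) := by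
  ext s
  simp only [delv, induced, Set.mem_setOf_eq]
  constructor
  · rintro ⟨⟨h1, h2⟩, h3⟩
    refine ⟨h1, fun x hx => Finset.mem_erase.mpr ⟨fun he => h3 (he ▸ hx), ?_⟩⟩
    rcases Finset.mem_insert.mp (h2 hx) with h | h
    · exact absurd (h ▸ hx) h3
    · exact h
  · rintro ⟨h1, h2⟩
    refine ⟨⟨h1, fun x hx => Finset.mem_insert_of_mem (Finset.mem_of_mem_erase (h2 hx))⟩, ?_⟩
    intro hv
    exact Finset.notMem_erase v S (h2 hv)

lemma induced_univ [Fintype V] (X : Set (Finset V)) : induced X Finset.univ = X := by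
  ext s; simp [induced, Finset.subset_univ]

/-- HV-level Mayer–Vietoris consequences. -/
lemma MV1 {X : Set (Finset V)} (hX : IsComplex X) (v : V) (i : ℕ)
    (h1 : HomologyVanishes X (i + 1)) (h2 : HomologyVanishes (delv X v) i) :
    HomologyVanishes (linkCplx X {v}) i :=
  (homologyVanishes_iff_amb (linkCplx_isComplex hX _) i).mpr
    (MV1amb hX v i ((homologyVanishes_iff_amb hX _).mp h1)
      ((homologyVanishes_iff_amb (delv_isComplex hX v) _).mp h2))

lemma MV2 {X : Set (Finset V)} (hX : IsComplex X) (v : V) (i : ℕ)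
    (h1 : HomologyVanishes X i) (h2 : HomologyVanishes (linkCplx X {v}) i) :
    HomologyVanishes (delv X v) i :=
  (homologyVanishes_iff_amb (delv_isComplex hX v) i).mpr
    (MV2amb hX v i ((homologyVanishes_iff_amb hX _).mp h1)
      ((homologyVanishes_iff_amb (linkCplx_isComplex hX _) _).mp h2))

lemma MV3 {X : Set (Finset V)} (hX : IsComplex X) (v : V) (j : ℕ)
    (h1 : HomologyVanishes (delv X v) (j + 1)) (h2 : HomologyVanishes (linkCplx X {v}) j) :
    HomologyVanishes X (j + 1) :=
  (homologyVanishes_iff_amb hX _).mpr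
    (MV3amb hX v j ((homologyVanishes_iff_amb (delv_isComplex hX v) _).mp h1)
      ((homologyVanishes_iff_amb (linkCplx_isComplex hX _) _).mp h2))

lemma HV_of_vertexfree {Y : Set (Finset V)} (hY : IsComplex Y) (h : ∀ s ∈ Y, s = ∅)
    (i : ℕ) : HomologyVanishes Y i := by
  rw [homologyVanishes_iff_amb hY]
  intro m hm _
  have hm0 : m = 0 := by
    ext τ
    by_contra hτ
    have himg := hm τ (by simpa using hτ)
    have h0 : τ 0 ∈ Finset.image τ Finset.univ :=
      Finset.mem_image.mpr ⟨0, Finset.mem_univ 0, rfl⟩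
    rw [h _ himg] at h0
    exact absurd h0 (Finset.notMem_empty _)
  exact ⟨0, Submodule.zero_mem _, by rw [map_zero, hm0]⟩

lemma HV_empty (i : ℕ) : HomologyVanishes (∅ : Set (Finset V)) i :=
  HV_of_vertexfree (fun s hs => absurd hs (Set.notMem_empty s)) (fun s hs => absurd hs (Set.notMem_empty s)) i

/-- Vanishing of homology in degrees at least the number of vertices. -/
lemma vanish_high : ∀ (N : ℕ) (W : Finset V), W.card ≤ N →
    ∀ (Y : Set (Finset V)), IsComplex Y → (∀ s ∈ Y, s ⊆ W) →
    ∀ i, W.card ≤ i → HomologyVanishes Y i := by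
  intro N
  induction N with
  | zero =>
    intro W hW Y hY hsupp i _
    have hWe : W = ∅ := Finset.card_eq_zero.mp (Nat.le_zero.mp hW)
    exact HV_of_vertexfree hY
      (fun s hs => Finset.subset_empty.mp (hWe ▸ hsupp s hs)) i
  | succ N ih =>
    intro W hW Y hY hsupp i hi
    rcases Finset.eq_empty_or_nonempty W with hWe | ⟨v, hv⟩
    · exact HV_of_vertexfree hY
        (fun s hs => Finset.subset_empty.mp (hWe ▸ hsupp s hs)) i
    · have hWc : 1 ≤ W.card := Finset.card_pos.mpr ⟨v, hv⟩
      obtain ⟨j, rfl⟩ : ∃ j, i = j + 1 := ⟨i - 1, by omega⟩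
      have hecard : (W.erase v).card = W.card - 1 := Finset.card_erase_of_mem hv
      refine MV3 hY v j ?_ ?_
      · refine ih (W.erase v) (by omega) (delv Y v) (delv_isComplex hY v) ?_ (j + 1) (by omega)
        rintro s ⟨hs1, hs2⟩
        exact fun x hx => Finset.mem_erase.mpr ⟨fun he => hs2 (he ▸ hx), hsupp s hs1 hx⟩
      · refine ih (W.erase v) (by omega) (linkCplx Y {v}) (linkCplx_isComplex hY _) ?_ j (by omega)
        intro s hs
        rw [link_singleton_mem] at hs
        intro x hx
        refine Finset.mem_erase.mpr ⟨fun he => hs.2 (he ▸ hx), ?_⟩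
        exact hsupp _ hs.1 (Finset.mem_insert_of_mem hx)

/-- Forward master lemma: Lerayness passes to links. -/
lemma master_forward {X : Set (Finset V)} (hX : IsComplex X) (d : ℕ)
    (hP : ∀ S : Finset V, ∀ i, d ≤ i → HomologyVanishes (induced X S) i) :
    ∀ (k : ℕ) (σ : Finset V), σ.card = k → σ ∈ X → ∀ (S : Finset V) (i : ℕ), d ≤ i →
      HomologyVanishes (induced (linkCplx X σ) S) i := by
  intro k
  induction k with
  | zero =>
    intro σ hσ _ S i hi
    rw [Finset.card_eq_zero] at hσ
    subst hσ
    rw [linkCplx_empty]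
    exact hP S i hi
  | succ k ih =>
    intro σ hσ hmem S i hi
    have hne : σ.Nonempty := by rw [← Finset.card_pos, hσ]; omega
    obtain ⟨v, hv⟩ := hne
    have hv' : v ∉ σ.erase v := Finset.notMem_erase v σ
    have hins : insert v (σ.erase v) = σ := Finset.insert_erase hv
    have hσ' : σ.erase v ∈ X := hX _ hmem _ (Finset.erase_subset v σ)
    have hcard : (σ.erase v).card = k := by
      rw [Finset.card_erase_of_mem hv, hσ]
      omega
    have hlk : linkCplx X σ = linkCplx (linkCplx X (σ.erase v)) {v} := by
      rw [linkCplx_linkCplx X (σ.erase v) {v} (Finset.disjoint_singleton_left.mpr hv'),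
        union_singleton_eq, hins]
    rw [hlk, induced_link, union_singleton_eq]
    have hY' : IsComplex (induced (linkCplx X (σ.erase v)) (insert v S)) :=
      induced_isComplex (linkCplx_isComplex hX _) _
    refine MV1 hY' v i ?_ ?_
    · exact ih (σ.erase v) hcard hσ' (insert v S) (i + 1) (le_trans hi (Nat.le_succ i))
    · rw [delv_induced]
      exact ih (σ.erase v) hcard hσ' (S.erase v) i hi

/-- Backward master lemma: vanishing of links implies Lerayness. -/
lemma master_back (d : ℕ) : ∀ (N : ℕ) (U : Finset V), U.card ≤ N →
    ∀ (X : Set (Finset V)), IsComplex X → (∀ s ∈ X, s ⊆ U) →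
    (∀ σ ∈ X, ∀ i, d ≤ i → HomologyVanishes (linkCplx X σ) i) →
    ∀ (S : Finset V) (i : ℕ), d ≤ i → HomologyVanishes (induced X S) i := by
  intro N
  induction N with
  | zero =>
    intro U hU X hX hsupp _ S i _
    have hUe : U = ∅ := Finset.card_eq_zero.mp (Nat.le_zero.mp hU)
    exact HV_of_vertexfree (induced_isComplex hX S)
      (fun s hs => Finset.subset_empty.mp (hUe ▸ hsupp s hs.1)) i
  | succ N ih =>
    intro U hU X hX hsupp hlinks S i hi
    -- the case of a full induced subcomplex
    have hfull : ∀ S' : Finset V, U ⊆ S' → HomologyVanishes (induced X S') i := by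
      intro S' hUS
      have hXS : induced X S' = X := by
        ext s
        exact ⟨fun hs => hs.1, fun hs => ⟨hs, (hsupp s hs).trans hUS⟩⟩
      rw [hXS]
      by_cases hemp : ∅ ∈ X
      · have := hlinks ∅ hemp i hi
        rwa [linkCplx_empty] at this
      · exact HV_of_vertexfree hX
          (fun s hs => (hemp (hX s hs ∅ (Finset.empty_subset s))).elim) i
    -- inner downward induction on the number of missing vertices
    have inner : ∀ (n : ℕ) (S' : Finset V), (U \ S').card ≤ n →
        HomologyVanishes (induced X S') i := by
      intro n
      induction n with
      | zero =>
        intro S' hcard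
        have : U ⊆ S' := by
          rw [← Finset.sdiff_eq_empty_iff_subset]
          exact Finset.card_eq_zero.mp (Nat.le_zero.mp hcard)
        exact hfull S' this
      | succ n ihn =>
        intro S' hcard
        by_cases hUS : U ⊆ S'
        · exact hfull S' hUS
        · have hne : (U \ S').Nonempty := by
            rw [Finset.sdiff_nonempty]
            exact hUS
          obtain ⟨v, hv⟩ := hne
          have hvU : v ∈ U := (Finset.mem_sdiff.mp hv).1
          have hvS : v ∉ S' := (Finset.mem_sdiff.mp hv).2
          have hX' : IsComplex (induced X (insert v S')) := induced_isComplex hX _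
          have h1 : HomologyVanishes (induced X (insert v S')) i := by
            refine ihn (insert v S') ?_
            have hsd : U \ insert v S' = (U \ S').erase v := by
              ext x
              simp only [Finset.mem_sdiff, Finset.mem_insert, Finset.mem_erase]
              tauto
            rw [hsd, Finset.card_erase_of_mem hv]
            omega
          have h2 : HomologyVanishes (linkCplx (induced X (insert v S')) {v}) i := by
            have hexch : linkCplx (induced X (insert v S')) {v}
                = induced (linkCplx X {v}) S' := by
              rw [induced_link, union_singleton_eq]
            rw [hexch]
            by_cases hvX : ({v} : Finset V) ∈ X
            · refine ih (U.erase v) ?_ (linkCplx X {v}) (linkCplx_isComplex hX _) ?_ ?_ S' i hi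
              · have : (U.erase v).card = U.card - 1 := Finset.card_erase_of_mem hvU
                have hc1 : 1 ≤ U.card := Finset.card_pos.mpr ⟨v, hvU⟩
                omega
              · intro s hs
                rw [link_singleton_mem] at hs
                intro x hx
                refine Finset.mem_erase.mpr ⟨fun he => hs.2 (he ▸ hx), ?_⟩
                exact hsupp _ hs.1 (Finset.mem_insert_of_mem hx)
              · intro σ hσ i' hi'
                have hσv : v ∉ σ := (link_singleton_mem.mp hσ).2
                have hu : ({v} : Finset V) ∪ σ = insert v σ := by
                  ext x; simp
                have hl2 : linkCplx (linkCplx X {v}) σ = linkCplx X (insert v σ) := by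
                  rw [linkCplx_linkCplx X {v} σ
                    (Finset.disjoint_singleton_right.mpr hσv), hu]
                rw [hl2]
                exact hlinks (insert v σ) (link_singleton_mem.mp hσ).1 i' hi'
            · have hZe : linkCplx X {v} = ∅ := by
                ext τ
                simp only [Set.mem_empty_iff_false, iff_false]
                intro hτ
                exact hvX (hX _ hτ.1 {v} (Finset.subset_union_right))
              rw [hZe]
              have : induced (∅ : Set (Finset V)) S' = ∅ := by
                ext s; simp [induced]
              rw [this]
              exact HV_empty i
          have h3 := MV2 hX' v i h1 h2
          have hdel : delv (induced X (insert v S')) v = induced X S' := by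
            rw [delv_induced, Finset.erase_eq_self.mpr hvS]
          rwa [hdel] at h3
    exact inner (U \ S).card S le_rfl

end Final

/-- `L(X) ≤ d` iff `H̃_i(lk(X,σ);ℚ) = 0` for every simplex `σ ∈ X` and every
`i ≥ d`. -/
theorem stmt7 {V : Type*} [DecidableEq V] [Fintype V] (X : Set (Finset V))
    (hX : IsComplex X) (d : ℕ) :
    lerayNumber X ≤ d ↔ ∀ σ ∈ X, ∀ i : ℕ, d ≤ i → HomologyVanishes (linkCplx X σ) i := by
  constructor
  · intro h σ hσ i hi
    have hPne : Fintype.card V ∈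
        {d' | ∀ S : Finset V, ∀ i, d' ≤ i → HomologyVanishes (induced X S) i} := by
      intro S i' hi'
      refine vanish_high (Finset.univ : Finset V).card Finset.univ le_rfl
        (induced X S) (induced_isComplex hX S) (fun s _ => Finset.subset_univ s) i' ?_
      rwa [Finset.card_univ]
    have hmem := Nat.sInf_mem ⟨Fintype.card V, hPne⟩
    have hd : ∀ S : Finset V, ∀ i', d ≤ i' → HomologyVanishes (induced X S) i' :=
      fun S i' hi' => hmem S i' (le_trans h hi')
    have := master_forward hX d hd σ.card σ rfl hσ Finset.univ i hi
    rwa [induced_univ] at this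
  · intro h
    apply Nat.sInf_le
    intro S i hi
    exact master_back d (Fintype.card V) Finset.univ (by rw [Finset.card_univ]) X hX
      (fun s _ => Finset.subset_univ s) h S i hi
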